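/- Let π be an LK-proof ending in a cut on A ∧ B whose left premise derives A ∧ B, Γ, Δ by an ∧-inference from π₀ ⊢ A, Γ and π₁ ⊢ B, Δ, and whose right premise derives Ā ∨ B̄, Π by an ∨-inference from π₂ ⊢ Ā, B̄, Π; and let π' be the result of the boolean reduction step: cut π₁ against π₂ on B, then cut π₀ against the result on A. Then L(π) = L(π'). -/

import Mathlib

set_option maxHeartbeats 1000000

namespace PGram

/-! ### First-order terms and formulas -/

/-- First-order terms: variables, function symbols and application. -/
inductive Term : Type
  | var (n : ℕ)
  | fn (k : ℕ)
  | app (s t : Term)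
deriving DecidableEq

instance : Inhabited Term := ⟨.fn 0⟩

/-- Substitution of the variable `v` by the term `t`. -/
def Term.subst (v : ℕ) (t : Term) : Term → Term
  | .var n => if n = v then t else .var n
  | .fn k => .fn k
  | .app s u => .app (Term.subst v t s) (Term.subst v t u)

/-- Renaming of variables. -/
def Term.ren (ρ : ℕ → ℕ) : Term → Term
  | .var n => .var (ρ n)
  | .fn k => .fn k
  | .app s u => .app (Term.ren ρ s) (Term.ren ρ u)

def Term.vars : Term → List ℕ
  | .var n => [n]
  | .fn _ => []
  | .app s u => s.vars ++ u.vars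

/-- Formulas of first-order logic in negation normal form (one-sided calculus). -/
inductive Formula : Type
  | atom (pos : Bool) (P : ℕ) (ts : List Term)
  | or (A B : Formula)
  | and (A B : Formula)
  | all (v : ℕ) (A : Formula)
  | ex (v : ℕ) (A : Formula)

instance : Inhabited Formula := ⟨.atom true 0 []⟩

/-- The de Morgan dual `Ā` of a formula `A`. -/
def Formula.dual : Formula → Formula
  | .atom b P ts => .atom (!b) P ts
  | .or A B => .and A.dual B.dual
  | .and A B => .or A.dual B.dual
  | .all v A => .ex v A.dual
  | .ex v A => .all v A.dual

/-- Substitution `A(v/t)`. -/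
def Formula.subst (v : ℕ) (t : Term) : Formula → Formula
  | .atom b P ts => .atom b P (ts.map (Term.subst v t))
  | .or A B => .or (Formula.subst v t A) (Formula.subst v t B)
  | .and A B => .and (Formula.subst v t A) (Formula.subst v t B)
  | .all w A => if w = v then .all w A else .all w (Formula.subst v t A)
  | .ex w A => if w = v then .ex w A else .ex w (Formula.subst v t A)

/-- Renaming of all variables of a formula. -/
def Formula.ren (ρ : ℕ → ℕ) : Formula → Formula
  | .atom b P ts => .atom b P (ts.map (Term.ren ρ))
  | .or A B => .or (Formula.ren ρ A) (Formula.ren ρ B)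
  | .and A B => .and (Formula.ren ρ A) (Formula.ren ρ B)
  | .all v A => .all (ρ v) (Formula.ren ρ A)
  | .ex v A => .ex (ρ v) (Formula.ren ρ A)

/-- Free variables of a formula. -/
def Formula.fv : Formula → List ℕ
  | .atom _ _ ts => (ts.map Term.vars).foldr (· ++ ·) []
  | .or A B => A.fv ++ B.fv
  | .and A B => A.fv ++ B.fv
  | .all v A => A.fv.erase v
  | .ex v A => A.fv.erase v

/-- Quantifier-freeness. -/
def Formula.qfB : Formula → Bool
  | .atom .. => true
  | .or A B => A.qfB && B.qfB
  | .and A B => A.qfB && B.qfB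
  | .all .. => false
  | .ex .. => false

/-- `∃ v₀ ⋯ ∃ vₖ F`. -/
def Formula.exs (vs : List ℕ) (F : Formula) : Formula := vs.foldr .ex F

/-- `∀ v₀ ⋯ ∀ vₖ F`. -/
def Formula.alls (vs : List ℕ) (F : Formula) : Formula := vs.foldr .all F

/-- Simultaneous (iterated) substitution of the variables `vs` by the terms `ts`. -/
def Formula.substList (vs : List ℕ) (ts : List Term) (F : Formula) : Formula :=
  (vs.zip ts).foldl (fun A p => A.subst p.1 p.2) F

/-- Propositional (truth-functional) evaluation of a quantifier-free formula
under a valuation of the atoms. -/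
def Formula.evalQ (val : ℕ → List Term → Bool) : Formula → Bool
  | .atom b P ts => if b then val P ts else !(val P ts)
  | .or A B => Formula.evalQ val A || Formula.evalQ val B
  | .and A B => Formula.evalQ val A && Formula.evalQ val B
  | .all _ A => Formula.evalQ val A
  | .ex _ A => Formula.evalQ val A

/-- Number of universal quantifiers in the (prenex) quantifier prefix. -/
def Formula.prefAll : Formula → ℕ
  | .all _ A => A.prefAll + 1
  | .ex _ A => A.prefAll
  | _ => 0

/-- Number of existential quantifiers in the (prenex) quantifier prefix. -/
def Formula.prefEx : Formula → ℕ
  | .ex _ A => A.prefEx + 1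
  | .all _ A => A.prefEx
  | _ => 0

/-- Length of the leading block of universal quantifiers. -/
def Formula.allPre : Formula → ℕ
  | .all _ A => A.allPre + 1
  | _ => 0

/-- Length of the leading block of existential quantifiers. -/
def Formula.exPre : Formula → ℕ
  | .ex _ A => A.exPre + 1
  | _ => 0

def Formula.headAll : Formula → Bool
  | .all .. => true
  | _ => false

def Formula.headEx : Formula → Bool
  | .ex .. => true
  | _ => false

/-- Prenex Σ₁ formulas. -/
inductive Sigma1 : Formula → Prop
  | qf {A} : A.qfB = true → Sigma1 A
  | ex {v A} : Sigma1 A → Sigma1 (.ex v A)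

/-- Prenex Π₁ formulas. -/
inductive Pi1 : Formula → Prop
  | qf {A} : A.qfB = true → Pi1 A
  | all {v A} : Pi1 A → Pi1 (.all v A)

/-- Prenex Π₂ formulas. -/
inductive Pi2 : Formula → Prop
  | sig {A} : Sigma1 A → Pi2 A
  | all {v A} : Pi2 A → Pi2 (.all v A)

/-- Prenex Σ₂ formulas. -/
inductive Sigma2 : Formula → Prop
  | pi {A} : Pi1 A → Sigma2 A
  | ex {v A} : Sigma2 A → Sigma2 (.ex v A)

/-- Genuine prenex Π₂ formulas (not already Σ₂, i.e. with a ∀ properly before an ∃). -/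
def GenuinePi2 (F : Formula) : Prop := Pi2 F ∧ ¬ Sigma2 F

/-- Universally quantified Π₂ formulas. -/
def UnivPi2 (F : Formula) : Prop := Pi2 F ∧ F.headAll = true

end PGram
namespace PGram

/-! ### The one-sided sequent calculus LK -/

/-- Sequents: finite sequences of formulas. -/
abbrev Sequent := List Formula

/-- One-sided (Tait-style) sequent calculus LK with explicit weakening,
contraction and (adjacent) permutation. -/
inductive LK : Sequent → Type
  | ax (b : Bool) (P : ℕ) (ts : List Term) : LK [.atom b P ts, .atom (!b) P ts]
  | orI (A B : Formula) (Γ : Sequent) : LK (A :: B :: Γ) → LK (.or A B :: Γ)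
  | andI (A B : Formula) (Γ Δ : Sequent) : LK (A :: Γ) → LK (B :: Δ) → LK (.and A B :: (Γ ++ Δ))
  | allI (v α : ℕ) (A : Formula) (Γ : Sequent) :
      LK (A.subst v (.var α) :: Γ) → LK (.all v A :: Γ)
  | exI (v : ℕ) (t : Term) (A : Formula) (Γ : Sequent) :
      LK (A.subst v t :: Γ) → LK (.ex v A :: Γ)
  | cut (A : Formula) (Γ Δ : Sequent) : LK (A :: Γ) → LK (A.dual :: Δ) → LK (Γ ++ Δ)
  | wk (A : Formula) (Γ : Sequent) : LK Γ → LK (A :: Γ)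
  | ctr (A : Formula) (Γ : Sequent) : LK (A :: A :: Γ) → LK (A :: Γ)
  | perm (A B : Formula) (Γ Δ : Sequent) : LK (Γ ++ B :: A :: Δ) → LK (Γ ++ A :: B :: Δ)

/-- A proof together with its end sequent. -/
def PProof : Type := Σ Γ : Sequent, LK Γ

/-- Transport of a proof along an equality of sequents. -/
def LK.castSeq {Γ Δ : Sequent} (h : Γ = Δ) (p : LK Γ) : LK Δ := h ▸ p

/-- Moving a formula leftwards across a block `Λ` (a sequence of permutations). -/
def LK.hoist (A : Formula) (Λ : Sequent) :
    ∀ (Ξ Θ : Sequent), LK (Ξ ++ (Λ ++ A :: Θ)) → LK (Ξ ++ A :: (Λ ++ Θ)) :=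
  List.reverseRecOn
    (motive := fun Λ => ∀ (Ξ Θ : Sequent), LK (Ξ ++ (Λ ++ A :: Θ)) → LK (Ξ ++ A :: (Λ ++ Θ)))
    Λ (fun _ _ p => p)
    (fun Λ' C ih Ξ Θ p =>
      LK.castSeq (by simp)
        (ih Ξ (C :: Θ) (LK.castSeq (by simp) (LK.perm A C (Ξ ++ Λ') Θ (LK.castSeq (by simp) p)))))

/-- Moving a formula rightwards across a block `Λ` (a sequence of permutations). -/
def LK.plunge (A : Formula) : ∀ (Λ Ξ Θ : Sequent), LK (Ξ ++ A :: (Λ ++ Θ)) → LK (Ξ ++ (Λ ++ A :: Θ))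
  | [], _, _, p => p
  | C :: Λ', Ξ, Θ, p =>
      LK.castSeq (by simp)
        (LK.plunge A Λ' (Ξ ++ [C]) Θ (LK.castSeq (by simp) (LK.perm C A Ξ (Λ' ++ Θ) p)))

/-- Pull a formula to the front of the sequent. -/
def LK.pull (A : Formula) (Λ : Sequent) {Θ : Sequent} (p : LK (Λ ++ A :: Θ)) :
    LK (A :: (Λ ++ Θ)) :=
  LK.hoist A Λ [] Θ p

/-- Push the front formula into the sequent. -/
def LK.push (A : Formula) (Λ : Sequent) {Θ : Sequent} (p : LK (A :: (Λ ++ Θ))) :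
    LK (Λ ++ A :: Θ) :=
  LK.plunge A Λ [] Θ p

/-- Bring the last formula to the front. -/
def LK.toFront (A : Formula) (Γ : Sequent) (p : LK (Γ ++ [A])) : LK (A :: Γ) :=
  LK.castSeq (by simp) (LK.pull A Γ (Θ := []) p)

/-- Bring the front formula to the end. -/
def LK.toEnd (A : Formula) (Γ : Sequent) (p : LK (A :: Γ)) : LK (Γ ++ [A]) :=
  LK.push A Γ (Θ := []) (LK.castSeq (by simp) p)

/-- Exchange two blocks (a sequence of permutations). -/
def LK.swapBlk : ∀ (Δ Γ Λ : Sequent), LK (Γ ++ (Λ ++ Δ)) → LK (Γ ++ (Δ ++ Λ))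
  | [], Γ, Λ, p => LK.castSeq (by simp) p
  | B :: Δ', Γ, Λ, p =>
      LK.castSeq (by simp)
        (LK.swapBlk Δ' (Γ ++ [B]) Λ (LK.castSeq (by simp) (LK.hoist B Λ Γ Δ' p)))

/-- Contract a duplicated block `Δ` (the rule `c*`). -/
def LK.ctrBlock : ∀ (Δ Γ : Sequent), LK (Γ ++ (Δ ++ Δ)) → LK (Γ ++ Δ)
  | [], Γ, p => LK.castSeq (by simp) p
  | B :: Δ', Γ, p =>
      let p1 : LK (B :: (Γ ++ (Δ' ++ B :: Δ'))) := LK.pull B Γ (Θ := Δ' ++ B :: Δ') p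
      let p2 : LK ((B :: (Γ ++ Δ')) ++ B :: Δ') := LK.castSeq (by simp) p1
      let p3 : LK (B :: ((B :: (Γ ++ Δ')) ++ Δ')) := LK.pull B (B :: (Γ ++ Δ')) (Θ := Δ') p2
      let p4 : LK (B :: ((Γ ++ Δ') ++ Δ')) := LK.ctr B ((Γ ++ Δ') ++ Δ') p3
      let p5 : LK ((B :: Γ) ++ (Δ' ++ Δ')) := LK.castSeq (by simp) p4
      let p6 : LK ((B :: Γ) ++ Δ') := LK.ctrBlock Δ' (B :: Γ) p5
      LK.push B Γ (Θ := Δ') p6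

/-- Weakening by a whole sequent `Δ` (the rule `w*`). -/
def LK.wkEnd : ∀ (Δ : Sequent) {Γ : Sequent}, LK Γ → LK (Γ ++ Δ)
  | [], _, p => LK.castSeq (by simp) p
  | B :: Δ', Γ, p => LK.castSeq (by simp) (LK.wkEnd Δ' (LK.toEnd B Γ (LK.wk B Γ p)))

/-- The eigenvariables of the strong quantifier inferences of a proof. -/
def LK.eigenVars : {Γ : Sequent} → LK Γ → List ℕ
  | _, .ax .. => []
  | _, .orI _ _ _ p => p.eigenVars
  | _, .andI _ _ _ _ p q => p.eigenVars ++ q.eigenVars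
  | _, .allI _ α _ _ p => α :: p.eigenVars
  | _, .exI _ _ _ _ p => p.eigenVars
  | _, .cut _ _ _ p q => p.eigenVars ++ q.eigenVars
  | _, .wk _ _ p => p.eigenVars
  | _, .ctr _ _ p => p.eigenVars
  | _, .perm _ _ _ _ p => p.eigenVars

/-- The cut formulas occurring in a proof. -/
def LK.cutFormulas : {Γ : Sequent} → LK Γ → List Formula
  | _, .ax .. => []
  | _, .orI _ _ _ p => p.cutFormulas
  | _, .andI _ _ _ _ p q => p.cutFormulas ++ q.cutFormulas
  | _, .allI _ _ _ _ p => p.cutFormulas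
  | _, .exI _ _ _ _ p => p.cutFormulas
  | _, .cut A _ _ p q => A :: (p.cutFormulas ++ q.cutFormulas)
  | _, .wk _ _ p => p.cutFormulas
  | _, .ctr _ _ p => p.cutFormulas
  | _, .perm _ _ _ _ p => p.cutFormulas

/-- Cut-freeness of a proof. -/
def LK.CutFree {Γ : Sequent} (p : LK Γ) : Prop := p.cutFormulas = []

/-- All cut formulas are prenex Ξ₂ or Σ₂. -/
def LK.CutsPi2Sigma2 {Γ : Sequent} (p : LK Γ) : Prop :=
  ∀ A ∈ p.cutFormulas, Pi2 A ∨ Sigma2 A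

/-- No contraction inference on the formula `C` occurs in the proof. -/
def LK.noCtrOn (C : Formula) : {Γ : Sequent} → LK Γ → Prop
  | _, .ax .. => True
  | _, .orI _ _ _ p => p.noCtrOn C
  | _, .andI _ _ _ _ p q => p.noCtrOn C ∧ q.noCtrOn C
  | _, .allI _ _ _ _ p => p.noCtrOn C
  | _, .exI _ _ _ _ p => p.noCtrOn C
  | _, .cut _ _ _ p q => p.noCtrOn C ∧ q.noCtrOn C
  | _, .wk _ _ p => p.noCtrOn C
  | _, .ctr A _ p => A ≠ C ∧ p.noCtrOn C
  | _, .perm _ _ _ _ p => p.noCtrOn C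

/-- Free variables of a sequent. -/
def seqFv (Γ : Sequent) : List ℕ := (Γ.map Formula.fv).foldr (· ++ ·) []

/-- Regularity: each strong quantifier inference has a unique eigenvariable,
and eigenvariables satisfy the eigenvariable condition. -/
def LK.Regular : {Γ : Sequent} → LK Γ → Prop
  | _, .ax .. => True
  | _, .orI _ _ _ p => p.Regular
  | _, .andI _ _ _ _ p q => p.Regular ∧ q.Regular ∧ p.eigenVars.Disjoint q.eigenVars
  | _, .allI v α A Γ p => α ∉ seqFv (.all v A :: Γ) ∧ α ∉ p.eigenVars ∧ p.Regular
  | _, .exI _ _ _ _ p => p.Regular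
  | _, .cut _ _ _ p q => p.Regular ∧ q.Regular ∧ p.eigenVars.Disjoint q.eigenVars
  | _, .wk _ _ p => p.Regular
  | _, .ctr _ _ p => p.Regular
  | _, .perm _ _ _ _ p => p.Regular

end PGram
namespace PGram

/-! ### The proof grammar -/

/-- Structured λ-terms of the proof grammar: de Bruijn bound variables, free
variables (eigenvariables), first-order function symbols, the empty sequence
`⟨⟩`, application, abstraction, pairing `⋆`, explicit substitution `s[α ↦ t]`,
non-terminals `σ_π^i`, and pair projections (for the context-free variant). -/
inductive GTerm : Type
  | bvar (n : ℕ)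
  | fvar (n : ℕ)
  | fn (k : ℕ)
  | unit
  | app (s t : GTerm)
  | lam (s : GTerm)
  | pair (s t : GTerm)
  | esub (s : GTerm) (α : ℕ) (t : GTerm)
  | nt (p : PProof) (i : ℕ)
  | pr0 (s : GTerm)
  | pr1 (s : GTerm)

/-- Iterated application. -/
def GTerm.apps (h : GTerm) (l : List GTerm) : GTerm := l.foldl GTerm.app h

/-- Embedding of first-order terms into grammar terms. -/
def Term.toG : Term → GTerm
  | .var n => .fvar n
  | .fn k => .fn k
  | .app s t => .app s.toG t.toG

/-- de Bruijn shifting. -/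
def GTerm.shift (d : ℕ) : ℕ → GTerm → GTerm
  | k, .bvar n => if n < k then .bvar n else .bvar (n + d)
  | _, .fvar n => .fvar n
  | _, .fn m => .fn m
  | _, .unit => .unit
  | k, .app s t => .app (GTerm.shift d k s) (GTerm.shift d k t)
  | k, .lam s => .lam (GTerm.shift d (k + 1) s)
  | k, .pair s t => .pair (GTerm.shift d k s) (GTerm.shift d k t)
  | k, .esub s α t => .esub (GTerm.shift d k s) α (GTerm.shift d k t)
  | _, .nt p i => .nt p i
  | k, .pr0 s => .pr0 (GTerm.shift d k s)
  | k, .pr1 s => .pr1 (GTerm.shift d k s)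

/-- de Bruijn instantiation (β-substitution of bound variable `k` by `u`). -/
def GTerm.instB (u : GTerm) : ℕ → GTerm → GTerm
  | k, .bvar n => if n = k then GTerm.shift k 0 u else if k < n then .bvar (n - 1) else .bvar n
  | _, .fvar n => .fvar n
  | _, .fn m => .fn m
  | _, .unit => .unit
  | k, .app s t => .app (GTerm.instB u k s) (GTerm.instB u k t)
  | k, .lam s => .lam (GTerm.instB u (k + 1) s)
  | k, .pair s t => .pair (GTerm.instB u k s) (GTerm.instB u k t)
  | k, .esub s α t => .esub (GTerm.instB u k s) α (GTerm.instB u k t)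
  | _, .nt p i => .nt p i
  | k, .pr0 s => .pr0 (GTerm.instB u k s)
  | k, .pr1 s => .pr1 (GTerm.instB u k s)

/-- Substitution of the free variable `α` by `u`. -/
def GTerm.substF (α : ℕ) (u : GTerm) : GTerm → GTerm
  | .bvar n => .bvar n
  | .fvar n => if n = α then u else .fvar n
  | .fn m => .fn m
  | .unit => .unit
  | .app s t => .app (GTerm.substF α u s) (GTerm.substF α u t)
  | .lam s => .lam (GTerm.substF α u s)
  | .pair s t => .pair (GTerm.substF α u s) (GTerm.substF α u t)
  | .esub s β t => .esub (GTerm.substF α u s) β (GTerm.substF α u t)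
  | .nt p i => .nt p i
  | .pr0 s => .pr0 (GTerm.substF α u s)
  | .pr1 s => .pr1 (GTerm.substF α u s)

/-- Evaluation `T ↦ T*` of all explicit substitutions. -/
def GTerm.evalE : GTerm → GTerm
  | .bvar n => .bvar n
  | .fvar n => .fvar n
  | .fn m => .fn m
  | .unit => .unit
  | .app s t => .app s.evalE t.evalE
  | .lam s => .lam s.evalE
  | .pair s t => .pair s.evalE t.evalE
  | .esub s α t => GTerm.substF α t.evalE s.evalE
  | .nt p i => .nt p i
  | .pr0 s => .pr0 s.evalE
  | .pr1 s => .pr1 s.evalE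

/-- Reading back a (non-terminal free, substitution free) grammar term as a
first-order term. -/
def GTerm.toFOT : GTerm → Option Term
  | .fvar n => some (.var n)
  | .fn k => some (.fn k)
  | .app s t => do
      let s' ← s.toFOT
      let t' ← t.toFOT
      pure (.app s' t')
  | _ => none

/-- Reading back a sequence-term `⟨t₁,…,tₖ⟩` as a list of first-order terms. -/
def GTerm.toSeq : GTerm → Option (List Term)
  | .unit => some []
  | .pair s t => do
      let s' ← s.toFOT
      let t' ← t.toSeq
      pure (s' :: t')
  | _ => none

/-- `m`-fold λ-abstraction. -/
def GTerm.lams : ℕ → GTerm → GTerm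
  | 0, b => b
  | m + 1, b => .lam (GTerm.lams m b)

/-- The sequence-term `⟨z₀,…,z_{m-1}⟩` of the bound variables of `m` enclosing
abstractions. -/
def GTerm.varSeq (m : ℕ) : GTerm :=
  (List.range m).reverse.foldr (fun j acc => .pair (.bvar j) acc) .unit

/-- The sequence-term `⟨c,…,c⟩` (`k` copies) of a fixed constant, written `c_A`. -/
def GTerm.constSeq (k : ℕ) : GTerm :=
  (List.range k).foldr (fun _ acc => .pair (.fn 0) acc) .unit

/-- The composition operation `(σ_p⁰ ∘_F σ_q⁰) x̄ ȳ` of the cut production rules. -/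
def comp (F : Formula) (p q : PProof) (xs ys : List GTerm) : GTerm :=
  if F.qfB then .unit
  else if F.headAll then
    .lams F.allPre
      (GTerm.apps (.nt p 0) (GTerm.varSeq F.allPre :: xs.map (GTerm.shift F.allPre 0)))
  else
    GTerm.apps (.nt p 0)
      ((GTerm.lams F.exPre
          (GTerm.apps (.nt q 0) (GTerm.varSeq F.exPre :: ys.map (GTerm.shift F.exPre 0)))) :: xs)

/-- One-step rewriting of the proof grammar: production rules (determined by
the last inference of the indexing proof), β-reduction and congruence closure.
The parameter `cf` selects the context-free variant of the `∀`-production rule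
(via pair projections). -/
inductive Step (cf : Bool) : GTerm → GTerm → Prop
  -- β-reduction and computation rules
  | beta (s t : GTerm) : Step cf (.app (.lam s) t) (GTerm.instB t 0 s)
  | unitApp (t : GTerm) : Step cf (.app .unit t) .unit
  | proj0 (s t : GTerm) : Step cf (.pr0 (.pair s t)) s
  | proj1 (s t : GTerm) : Step cf (.pr1 (.pair s t)) t
  -- congruence closure
  | appL {s s'} (t : GTerm) : Step cf s s' → Step cf (.app s t) (.app s' t)
  | appR (s : GTerm) {t t'} : Step cf t t' → Step cf (.app s t) (.app s t')
  | lamC {s s'} : Step cf s s' → Step cf (.lam s) (.lam s')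
  | pairL {s s'} (t : GTerm) : Step cf s s' → Step cf (.pair s t) (.pair s' t)
  | pairR (s : GTerm) {t t'} : Step cf t t' → Step cf (.pair s t) (.pair s t')
  | esubL {s s'} (α : ℕ) (t : GTerm) : Step cf s s' → Step cf (.esub s α t) (.esub s' α t)
  | esubR (s : GTerm) (α : ℕ) {t t'} : Step cf t t' → Step cf (.esub s α t) (.esub s α t')
  | pr0C {s s'} : Step cf s s' → Step cf (.pr0 s) (.pr0 s')
  | pr1C {s s'} : Step cf s s' → Step cf (.pr1 s) (.pr1 s')
  -- production rules (cf. Table 2)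
  | ax0 (b P ts) (z₀ z₁ : GTerm) :
      Step cf (GTerm.apps (.nt ⟨_, LK.ax b P ts⟩ 0) [z₀, z₁]) z₁
  | ax1 (b P ts) (z₀ z₁ : GTerm) :
      Step cf (GTerm.apps (.nt ⟨_, LK.ax b P ts⟩ 1) [z₀, z₁]) z₀
  | orI0 {A B Γ} (p : LK (A :: B :: Γ)) (z : GTerm) (ys : List GTerm)
      (hy : ys.length = Γ.length) :
      Step cf (GTerm.apps (.nt ⟨_, LK.orI A B Γ p⟩ 0) (z :: ys)) .unit
  | orIS {A B Γ} (p : LK (A :: B :: Γ)) (i : ℕ) (z : GTerm) (ys : List GTerm)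
      (hy : ys.length = Γ.length) :
      Step cf (GTerm.apps (.nt ⟨_, LK.orI A B Γ p⟩ (i + 1)) (z :: ys))
        (GTerm.apps (.nt ⟨_, p⟩ (i + 2)) (.unit :: .unit :: ys))
  | andI0 {A B Γ Δ} (p : LK (A :: Γ)) (q : LK (B :: Δ)) (z : GTerm) (xs ys : List GTerm)
      (hx : xs.length = Γ.length) (hy : ys.length = Δ.length) :
      Step cf (GTerm.apps (.nt ⟨_, LK.andI A B Γ Δ p q⟩ 0) (z :: (xs ++ ys))) .unit
  | andIL {A B Γ Δ} (p : LK (A :: Γ)) (q : LK (B :: Δ)) (i : ℕ) (z : GTerm)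
      (xs ys : List GTerm) (hx : xs.length = Γ.length) (hy : ys.length = Δ.length)
      (hi : i < Γ.length) :
      Step cf (GTerm.apps (.nt ⟨_, LK.andI A B Γ Δ p q⟩ (i + 1)) (z :: (xs ++ ys)))
        (GTerm.apps (.nt ⟨_, p⟩ (i + 1)) (.unit :: xs))
  | andIR {A B Γ Δ} (p : LK (A :: Γ)) (q : LK (B :: Δ)) (i : ℕ) (z : GTerm)
      (xs ys : List GTerm) (hx : xs.length = Γ.length) (hy : ys.length = Δ.length)
      (hi : Γ.length ≤ i) :
      Step cf (GTerm.apps (.nt ⟨_, LK.andI A B Γ Δ p q⟩ (i + 1)) (z :: (xs ++ ys)))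
        (GTerm.apps (.nt ⟨_, q⟩ (i - Γ.length + 1)) (.unit :: ys))
  | allP {v α A Γ} (p : LK (A.subst v (.var α) :: Γ)) (i : ℕ) (z₀ z₁ : GTerm)
      (ys : List GTerm) (hy : ys.length = Γ.length) (hcf : cf = false) :
      Step cf (GTerm.apps (.nt ⟨_, LK.allI v α A Γ p⟩ i) (.pair z₀ z₁ :: ys))
        (.esub (GTerm.apps (.nt ⟨_, p⟩ i) (z₁ :: ys)) α z₀)
  | allPcf {v α A Γ} (p : LK (A.subst v (.var α) :: Γ)) (i : ℕ) (z : GTerm)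
      (ys : List GTerm) (hy : ys.length = Γ.length) (hcf : cf = true) :
      Step cf (GTerm.apps (.nt ⟨_, LK.allI v α A Γ p⟩ i) (z :: ys))
        (.esub (GTerm.apps (.nt ⟨_, p⟩ i) (.pr1 z :: ys)) α (.pr0 z))
  | exI0 {v t A Γ} (p : LK (A.subst v t :: Γ)) (z : GTerm) (ys : List GTerm)
      (hy : ys.length = Γ.length) :
      Step cf (GTerm.apps (.nt ⟨_, LK.exI v t A Γ p⟩ 0) (z :: ys))
        (.pair t.toG (GTerm.apps (.nt ⟨_, p⟩ 0) (.app z t.toG :: ys)))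
  | exIS {v t A Γ} (p : LK (A.subst v t :: Γ)) (i : ℕ) (z : GTerm) (ys : List GTerm)
      (hy : ys.length = Γ.length) :
      Step cf (GTerm.apps (.nt ⟨_, LK.exI v t A Γ p⟩ (i + 1)) (z :: ys))
        (GTerm.apps (.nt ⟨_, p⟩ (i + 1)) (.app z t.toG :: ys))
  | cutL {A Γ Δ} (p : LK (A :: Γ)) (q : LK (A.dual :: Δ)) (i : ℕ) (xs ys : List GTerm)
      (hx : xs.length = Γ.length) (hy : ys.length = Δ.length) (hi : i < Γ.length) :
      Step cf (GTerm.apps (.nt ⟨_, LK.cut A Γ Δ p q⟩ i) (xs ++ ys))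
        (GTerm.apps (.nt ⟨_, p⟩ (i + 1)) (comp A.dual ⟨_, q⟩ ⟨_, p⟩ ys xs :: xs))
  | cutR {A Γ Δ} (p : LK (A :: Γ)) (q : LK (A.dual :: Δ)) (i : ℕ) (xs ys : List GTerm)
      (hx : xs.length = Γ.length) (hy : ys.length = Δ.length) (hi : Γ.length ≤ i) :
      Step cf (GTerm.apps (.nt ⟨_, LK.cut A Γ Δ p q⟩ i) (xs ++ ys))
        (GTerm.apps (.nt ⟨_, q⟩ (i - Γ.length + 1)) (comp A ⟨_, p⟩ ⟨_, q⟩ xs ys :: ys))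
  | ctr0a {A Γ} (p : LK (A :: A :: Γ)) (z : GTerm) (ys : List GTerm)
      (hy : ys.length = Γ.length) :
      Step cf (GTerm.apps (.nt ⟨_, LK.ctr A Γ p⟩ 0) (z :: ys))
        (GTerm.apps (.nt ⟨_, p⟩ 0) (z :: z :: ys))
  | ctr0b {A Γ} (p : LK (A :: A :: Γ)) (z : GTerm) (ys : List GTerm)
      (hy : ys.length = Γ.length) :
      Step cf (GTerm.apps (.nt ⟨_, LK.ctr A Γ p⟩ 0) (z :: ys))
        (GTerm.apps (.nt ⟨_, p⟩ 1) (z :: z :: ys))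
  | ctrS {A Γ} (p : LK (A :: A :: Γ)) (i : ℕ) (z : GTerm) (ys : List GTerm)
      (hy : ys.length = Γ.length) :
      Step cf (GTerm.apps (.nt ⟨_, LK.ctr A Γ p⟩ (i + 1)) (z :: ys))
        (GTerm.apps (.nt ⟨_, p⟩ (i + 2)) (z :: z :: ys))
  | wk0 {A Γ} (p : LK Γ) (z : GTerm) (ys : List GTerm) (hy : ys.length = Γ.length) :
      Step cf (GTerm.apps (.nt ⟨_, LK.wk A Γ p⟩ 0) (z :: ys)) (GTerm.constSeq A.prefEx)
  | wkS {A Γ} (p : LK Γ) (i : ℕ) (z : GTerm) (ys : List GTerm)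
      (hy : ys.length = Γ.length) :
      Step cf (GTerm.apps (.nt ⟨_, LK.wk A Γ p⟩ (i + 1)) (z :: ys))
        (GTerm.apps (.nt ⟨_, p⟩ i) ys)
  | permP {A B Γ Δ} (p : LK (Γ ++ B :: A :: Δ)) (i : ℕ) (xs : List GTerm)
      (z₀ z₁ : GTerm) (ys : List GTerm) (hx : xs.length = Γ.length)
      (hy : ys.length = Δ.length) :
      Step cf (GTerm.apps (.nt ⟨_, LK.perm A B Γ Δ p⟩ i) (xs ++ z₀ :: z₁ :: ys))
        (GTerm.apps
          (.nt ⟨_, p⟩ (if i = Γ.length then i + 1 else if i = Γ.length + 1 then i - 1 else i))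
          (xs ++ z₁ :: z₀ :: ys))

/-- Normal forms of the grammar rewriting relation. -/
def NormalForm (cf : Bool) (u : GTerm) : Prop := ∀ v, ¬ Step cf u v

/-- The language of a grammar term: the set of terms derivable from it to
which no further rules apply. -/
def LangT (cf : Bool) (u : GTerm) : Set GTerm :=
  {v | Relation.ReflTransGen (Step cf) u v ∧ NormalForm cf v}

/-- The start term `σ_π^i ⟨⟩ ⋯ ⟨⟩`. -/
def startTerm (p : PProof) (i : ℕ) : GTerm :=
  GTerm.apps (.nt p i) (List.replicate p.1.length .unit)

/-- The language `L(π)` of the proof grammar `G_π`: all pairs `(i, T*)` of an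
end-sequent index and the evaluated tuple of first-order witness terms of a
non-terminal-free sequence-term `T` derivable from `σ_π^i ⟨⟩ ⋯ ⟨⟩`. -/
def LangP (cf : Bool) (p : PProof) : Set (ℕ × List Term) :=
  {x | x.1 < p.1.length ∧ ∃ T ∈ LangT cf (startTerm p x.1), T.evalE.toSeq = some x.2}

/-- The language of the proof grammar `G_π`. -/
def L (p : PProof) : Set (ℕ × List Term) := LangP false p

/-- The language of the context-free variant `G'_π` of the proof grammar. -/
def L' (p : PProof) : Set (ℕ × List Term) := LangP true p

end PGram
namespace PGram

/-! ### Herbrand sets -/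

/-- The Herbrand set of a proof of a prenex Σ₁ sequent: the set of pairs
`(i, t̄)` of instance tuples of the existential quantifier block of the `i`-th
end-sequent formula, as the witnesses appear in the proof. -/
def LK.herbrand : {Γ : Sequent} → LK Γ → Set (ℕ × List Term)
  | _, .ax .. => {x | (x.1 = 0 ∨ x.1 = 1) ∧ x.2 = []}
  | _, .orI _ _ _ p =>
      {x | (x.1 = 0 ∧ x.2 = []) ∨ (0 < x.1 ∧ (x.1 + 1, x.2) ∈ p.herbrand)}
  | _, .andI _ _ Γ _ p q =>
      {x | (x.1 = 0 ∧ x.2 = []) ∨ (0 < x.1 ∧ x.1 ≤ Γ.length ∧ (x.1, x.2) ∈ p.herbrand) ∨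
        (Γ.length < x.1 ∧ (x.1 - Γ.length, x.2) ∈ q.herbrand)}
  | _, .allI _ _ _ _ p => p.herbrand
  | _, .exI _ t _ _ p =>
      {x | (x.1 = 0 ∧ ∃ ts, x.2 = t :: ts ∧ (0, ts) ∈ p.herbrand) ∨
        (0 < x.1 ∧ (x.1, x.2) ∈ p.herbrand)}
  | _, .cut _ Γ _ p q =>
      {x | (x.1 < Γ.length ∧ (x.1 + 1, x.2) ∈ p.herbrand) ∨
        (Γ.length ≤ x.1 ∧ (x.1 - Γ.length + 1, x.2) ∈ q.herbrand)}
  | _, .wk _ _ p => {x | 0 < x.1 ∧ (x.1 - 1, x.2) ∈ p.herbrand}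
  | _, .ctr _ _ p =>
      {x | (x.1 = 0 ∧ ((0, x.2) ∈ p.herbrand ∨ (1, x.2) ∈ p.herbrand)) ∨
        (0 < x.1 ∧ (x.1 + 1, x.2) ∈ p.herbrand)}
  | _, .perm _ _ Γ _ p =>
      {x | (x.1 = Γ.length ∧ (x.1 + 1, x.2) ∈ p.herbrand) ∨
        (x.1 = Γ.length + 1 ∧ (x.1 - 1, x.2) ∈ p.herbrand) ∨
        (x.1 ≠ Γ.length ∧ x.1 ≠ Γ.length + 1 ∧ (x.1, x.2) ∈ p.herbrand)}

/-! ### Substitution and renaming of proofs -/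

/-- `VSub α t π π'` expresses that `π'` is the result `π[α ↦ t]` of replacing
the (eigen)variable `α` by the term `t` throughout the proof `π`. -/
inductive VSub (α : ℕ) (t : Term) : {Γ Δ : Sequent} → LK Γ → LK Δ → Prop
  | ax (b P ts) : VSub α t (.ax b P ts) (.ax b P (ts.map (Term.subst α t)))
  | orI {A B Γ A' B' Γ'} (p : LK (A :: B :: Γ)) (p' : LK (A' :: B' :: Γ'))
      (hA : A' = A.subst α t) (hB : B' = B.subst α t)
      (hΓ : Γ' = Γ.map (Formula.subst α t)) (h : VSub α t p p') :
      VSub α t (.orI A B Γ p) (.orI A' B' Γ' p')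
  | andI {A B Γ Δ A' B' Γ' Δ'} (p : LK (A :: Γ)) (q : LK (B :: Δ))
      (p' : LK (A' :: Γ')) (q' : LK (B' :: Δ'))
      (hA : A' = A.subst α t) (hB : B' = B.subst α t)
      (hΓ : Γ' = Γ.map (Formula.subst α t)) (hΔ : Δ' = Δ.map (Formula.subst α t))
      (hp : VSub α t p p') (hq : VSub α t q q') :
      VSub α t (.andI A B Γ Δ p q) (.andI A' B' Γ' Δ' p' q')
  | allI {v β A Γ A' Γ'} (p : LK (A.subst v (.var β) :: Γ))
      (p' : LK (A'.subst v (.var β) :: Γ')) (hβ : β ≠ α)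
      (hA : A' = A.subst α t) (hΓ : Γ' = Γ.map (Formula.subst α t))
      (h : VSub α t p p') : VSub α t (.allI v β A Γ p) (.allI v β A' Γ' p')
  | exI {v r A Γ A' Γ'} (p : LK (A.subst v r :: Γ))
      (p' : LK (A'.subst v (r.subst α t) :: Γ'))
      (hA : A' = A.subst α t) (hΓ : Γ' = Γ.map (Formula.subst α t))
      (h : VSub α t p p') : VSub α t (.exI v r A Γ p) (.exI v (r.subst α t) A' Γ' p')
  | cut {A Γ Δ A' Γ' Δ'} (p : LK (A :: Γ)) (q : LK (A.dual :: Δ))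
      (p' : LK (A' :: Γ')) (q' : LK (A'.dual :: Δ'))
      (hA : A' = A.subst α t) (hΓ : Γ' = Γ.map (Formula.subst α t))
      (hΔ : Δ' = Δ.map (Formula.subst α t))
      (hp : VSub α t p p') (hq : VSub α t q q') :
      VSub α t (.cut A Γ Δ p q) (.cut A' Γ' Δ' p' q')
  | wk {A Γ A' Γ'} (p : LK Γ) (p' : LK Γ')
      (hA : A' = A.subst α t) (hΓ : Γ' = Γ.map (Formula.subst α t))
      (h : VSub α t p p') : VSub α t (.wk A Γ p) (.wk A' Γ' p')
  | ctr {A Γ A' Γ'} (p : LK (A :: A :: Γ)) (p' : LK (A' :: A' :: Γ'))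
      (hA : A' = A.subst α t) (hΓ : Γ' = Γ.map (Formula.subst α t))
      (h : VSub α t p p') : VSub α t (.ctr A Γ p) (.ctr A' Γ' p')
  | perm {A B Γ Δ A' B' Γ' Δ'} (p : LK (Γ ++ B :: A :: Δ)) (p' : LK (Γ' ++ B' :: A' :: Δ'))
      (hA : A' = A.subst α t) (hB : B' = B.subst α t)
      (hΓ : Γ' = Γ.map (Formula.subst α t)) (hΔ : Δ' = Δ.map (Formula.subst α t))
      (h : VSub α t p p') : VSub α t (.perm A B Γ Δ p) (.perm A' B' Γ' Δ' p')

/-- `Ren ρ π π'` expresses that `π'` is the result of renaming all variables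
of `π` (in particular its eigenvariables) along `ρ`. -/
inductive Ren (ρ : ℕ → ℕ) : {Γ Δ : Sequent} → LK Γ → LK Δ → Prop
  | ax (b P ts) : Ren ρ (.ax b P ts) (.ax b P (ts.map (Term.ren ρ)))
  | orI {A B Γ A' B' Γ'} (p : LK (A :: B :: Γ)) (p' : LK (A' :: B' :: Γ'))
      (hA : A' = A.ren ρ) (hB : B' = B.ren ρ) (hΓ : Γ' = Γ.map (Formula.ren ρ))
      (h : Ren ρ p p') : Ren ρ (.orI A B Γ p) (.orI A' B' Γ' p')
  | andI {A B Γ Δ A' B' Γ' Δ'} (p : LK (A :: Γ)) (q : LK (B :: Δ))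
      (p' : LK (A' :: Γ')) (q' : LK (B' :: Δ'))
      (hA : A' = A.ren ρ) (hB : B' = B.ren ρ)
      (hΓ : Γ' = Γ.map (Formula.ren ρ)) (hΔ : Δ' = Δ.map (Formula.ren ρ))
      (hp : Ren ρ p p') (hq : Ren ρ q q') :
      Ren ρ (.andI A B Γ Δ p q) (.andI A' B' Γ' Δ' p' q')
  | allI {v β A Γ v' β' A' Γ'} (p : LK (A.subst v (.var β) :: Γ))
      (p' : LK (A'.subst v' (.var β') :: Γ'))
      (hv : v' = ρ v) (hβ : β' = ρ β) (hA : A' = A.ren ρ)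
      (hΓ : Γ' = Γ.map (Formula.ren ρ)) (h : Ren ρ p p') :
      Ren ρ (.allI v β A Γ p) (.allI v' β' A' Γ' p')
  | exI {v r A Γ v' A' Γ'} (p : LK (A.subst v r :: Γ))
      (p' : LK (A'.subst v' (r.ren ρ) :: Γ'))
      (hv : v' = ρ v) (hA : A' = A.ren ρ) (hΓ : Γ' = Γ.map (Formula.ren ρ))
      (h : Ren ρ p p') : Ren ρ (.exI v r A Γ p) (.exI v' (r.ren ρ) A' Γ' p')
  | cut {A Γ Δ A' Γ' Δ'} (p : LK (A :: Γ)) (q : LK (A.dual :: Δ))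
      (p' : LK (A' :: Γ')) (q' : LK (A'.dual :: Δ'))
      (hA : A' = A.ren ρ) (hΓ : Γ' = Γ.map (Formula.ren ρ)) (hΔ : Δ' = Δ.map (Formula.ren ρ))
      (hp : Ren ρ p p') (hq : Ren ρ q q') :
      Ren ρ (.cut A Γ Δ p q) (.cut A' Γ' Δ' p' q')
  | wk {A Γ A' Γ'} (p : LK Γ) (p' : LK Γ')
      (hA : A' = A.ren ρ) (hΓ : Γ' = Γ.map (Formula.ren ρ)) (h : Ren ρ p p') :
      Ren ρ (.wk A Γ p) (.wk A' Γ' p')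
  | ctr {A Γ A' Γ'} (p : LK (A :: A :: Γ)) (p' : LK (A' :: A' :: Γ'))
      (hA : A' = A.ren ρ) (hΓ : Γ' = Γ.map (Formula.ren ρ)) (h : Ren ρ p p') :
      Ren ρ (.ctr A Γ p) (.ctr A' Γ' p')
  | perm {A B Γ Δ A' B' Γ' Δ'} (p : LK (Γ ++ B :: A :: Δ)) (p' : LK (Γ' ++ B' :: A' :: Δ'))
      (hA : A' = A.ren ρ) (hB : B' = B.ren ρ)
      (hΓ : Γ' = Γ.map (Formula.ren ρ)) (hΔ : Δ' = Δ.map (Formula.ren ρ))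
      (h : Ren ρ p p') : Ren ρ (.perm A B Γ Δ p) (.perm A' B' Γ' Δ' p')

/-- `π'` is a fresh (eigenvariable-renamed) copy of `π` with the same end
sequent. -/
def FreshCopy (p q : PProof) : Prop := p.1 = q.1 ∧ ∃ ρ : ℕ → ℕ, Ren ρ p.2 q.2

end PGram
namespace PGram

/-! ### Gentzen-style cut reduction steps (Figure 1) -/

/-- Axiom reduction, redex: a cut of `π₀ ⊢ Γ, A` against the axiom `Ā, A`. -/
def axRedex {b : Bool} {P : ℕ} {ts : List Term} {Γ : Sequent}
    (π₀ : LK (Γ ++ [Formula.atom b P ts])) : PProof :=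
  ⟨Γ ++ [Formula.atom b P ts],
    .cut (.atom b P ts) Γ [.atom b P ts] (LK.toFront _ Γ π₀)
      (LK.castSeq (by simp [Formula.dual]) (.ax (!b) P ts))⟩

/-- Boolean reduction, redex. -/
def boolRedex {A B : Formula} {Γ Δ Λ : Sequent} (π₀ : LK (A :: Γ)) (π₁ : LK (B :: Δ))
    (π₂ : LK (A.dual :: B.dual :: Λ)) : PProof :=
  ⟨(Γ ++ Δ) ++ Λ,
    .cut (.and A B) (Γ ++ Δ) Λ (.andI A B Γ Δ π₀ π₁) (.orI A.dual B.dual Λ π₂)⟩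

/-- Boolean reduction, reduct. -/
def boolReduct {A B : Formula} {Γ Δ Λ : Sequent} (π₀ : LK (A :: Γ)) (π₁ : LK (B :: Δ))
    (π₂ : LK (A.dual :: B.dual :: Λ)) : PProof :=
  ⟨(Γ ++ Δ) ++ Λ,
    LK.castSeq (by simp)
      (.cut A Γ (Δ ++ Λ) π₀
        (LK.pull A.dual Δ (.cut B Δ (A.dual :: Λ) π₁ (.perm B.dual A.dual [] Λ π₂))))⟩

/-- Quantifier reduction, redex: a cut on `∀v A` between a `∀`-inference with
eigenvariable `α` and an `∃`-inference with witness `t`. -/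
def quantRedex {v α : ℕ} {A : Formula} {Γ Δ : Sequent} {t : Term}
    (π₀ : LK (A.subst v (.var α) :: Γ)) (π₁ : LK (A.dual.subst v t :: Δ)) : PProof :=
  ⟨Γ ++ Δ, .cut (.all v A) Γ Δ (.allI v α A Γ π₀) (.exI v t A.dual Δ π₁)⟩

/-- Quantifier reduction, reduct: the cut on `A(v/t)`. -/
def quantReduct {B : Formula} {Γ Δ : Sequent} (π₀' : LK (B :: Γ))
    (π₁' : LK (B.dual :: Δ)) : PProof :=
  ⟨Γ ++ Δ, .cut B Γ Δ π₀' π₁'⟩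

/-- Weakening reduction, redex. -/
def wkRedex {A : Formula} {Γ Δ : Sequent} (π₀ : LK Γ) (π₁ : LK (A.dual :: Δ)) : PProof :=
  ⟨Γ ++ Δ, .cut A Γ Δ (.wk A Γ π₀) π₁⟩

/-- Weakening reduction, reduct: `π₀` followed by weakenings introducing `Δ`. -/
def wkReduct {Γ : Sequent} (Δ : Sequent) (π₀ : LK Γ) : PProof :=
  ⟨Γ ++ Δ, LK.wkEnd Δ π₀⟩

/-- Contraction reduction, redex: a cut on `F` against a contraction on `F`. -/
def ctrRedex {F : Formula} {Γ Δ : Sequent} (π₀ : LK (F :: F :: Γ))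
    (π₁ : LK (F.dual :: Δ)) : PProof :=
  ⟨Γ ++ Δ, .cut F Γ Δ (.ctr F Γ π₀) π₁⟩

/-- Contraction reduction, reduct: two successive cuts (against `π₁` and a
fresh copy `π₁'` of it) followed by contractions `c*` of the duplicated
context `Δ`. -/
def ctrReduct {F : Formula} {Γ Δ : Sequent} (π₀ : LK (F :: F :: Γ))
    (π₁ π₁' : LK (F.dual :: Δ)) : PProof :=
  ⟨Γ ++ Δ,
    LK.ctrBlock Δ Γ
      (LK.castSeq (by simp) (.cut F (Γ ++ Δ) Δ (.cut F (F :: Γ) Δ π₀ π₁) π₁'))⟩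

/-- Permutation of two cuts (on `F` and on `G`), the un-permuted proof. -/
def cutPerm1 {F G : Formula} {Γ Δ Λ : Sequent} (π₀ : LK (F :: G :: Γ))
    (π₁ : LK (F.dual :: Δ)) (π₂ : LK (G.dual :: Λ)) : PProof :=
  ⟨(Γ ++ Δ) ++ Λ, .cut G (Γ ++ Δ) Λ (.cut F (G :: Γ) Δ π₀ π₁) π₂⟩

/-- Permutation of two cuts (on `F` and on `G`), the permuted proof. -/
def cutPerm2 {F G : Formula} {Γ Δ Λ : Sequent} (π₀ : LK (F :: G :: Γ))
    (π₁ : LK (F.dual :: Δ)) (π₂ : LK (G.dual :: Λ)) : PProof :=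
  ⟨(Γ ++ Δ) ++ Λ,
    LK.castSeq (by simp)
      (LK.swapBlk Δ Γ Λ
        (LK.castSeq (by simp)
          (.cut F (Γ ++ Λ) Δ (.cut G (F :: Γ) Λ (.perm G F [] Γ π₀) π₂) π₁)))⟩

/-- Root axiom reduction step. -/
inductive RAx : PProof → PProof → Prop
  | mk {b : Bool} {P : ℕ} {ts : List Term} {Γ : Sequent}
      (π₀ : LK (Γ ++ [Formula.atom b P ts])) : RAx (axRedex π₀) ⟨_, π₀⟩

/-- Root boolean reduction step. -/
inductive RBool : PProof → PProof → Prop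
  | mk {A B : Formula} {Γ Δ Λ : Sequent} (π₀ : LK (A :: Γ)) (π₁ : LK (B :: Δ))
      (π₂ : LK (A.dual :: B.dual :: Λ)) :
      RBool (boolRedex π₀ π₁ π₂) (boolReduct π₀ π₁ π₂)

/-- Root quantifier reduction step. -/
inductive RQuant : PProof → PProof → Prop
  | mk {v α : ℕ} {A B : Formula} {Γ Δ : Sequent} {t : Term}
      (π₀ : LK (A.subst v (.var α) :: Γ)) (π₁ : LK (A.dual.subst v t :: Δ))
      (π₀' : LK (B :: Γ)) (π₁' : LK (B.dual :: Δ)) (hB : B = A.subst v t)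
      (hs : VSub α t π₀ π₀') (hπ : HEq π₁ π₁') :
      RQuant (quantRedex π₀ π₁) (quantReduct π₀' π₁')

/-- Root weakening reduction step. -/
inductive RWk : PProof → PProof → Prop
  | mk {A : Formula} {Γ Δ : Sequent} (π₀ : LK Γ) (π₁ : LK (A.dual :: Δ)) :
      RWk (wkRedex (A := A) π₀ π₁) (wkReduct Δ π₀)

/-- Root contraction reduction step on the cut formula `F`. -/
inductive RCtr (F : Formula) : PProof → PProof → Prop
  | mk {Γ Δ : Sequent} (π₀ : LK (F :: F :: Γ)) (π₁ π₁' : LK (F.dual :: Δ))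
      (hfresh : FreshCopy ⟨_, π₁⟩ ⟨_, π₁'⟩) :
      RCtr F (ctrRedex π₀ π₁) (ctrReduct π₀ π₁ π₁')

/-- Root permutation of a unary inference below a cut. -/
inductive RUn : PProof → PProof → Prop
  | orP {A B F : Formula} {Ξ₁ Ξ₂ Δ : Sequent} (π₀ : LK (A :: B :: (Ξ₁ ++ F :: Ξ₂)))
      (π₁ : LK (F.dual :: Δ)) :
      RUn ⟨_, .cut F (.or A B :: (Ξ₁ ++ Ξ₂)) Δ
              (LK.pull F (.or A B :: Ξ₁) (.orI A B (Ξ₁ ++ F :: Ξ₂) π₀)) π₁⟩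
          ⟨_, .orI A B ((Ξ₁ ++ Ξ₂) ++ Δ)
              (.cut F (A :: B :: (Ξ₁ ++ Ξ₂)) Δ (LK.pull F (A :: B :: Ξ₁) π₀) π₁)⟩
  | allP {v β : ℕ} {A F : Formula} {Ξ₁ Ξ₂ Δ : Sequent}
      (π₀ : LK (A.subst v (.var β) :: (Ξ₁ ++ F :: Ξ₂))) (π₁ : LK (F.dual :: Δ)) :
      RUn ⟨_, .cut F (.all v A :: (Ξ₁ ++ Ξ₂)) Δ
              (LK.pull F (.all v A :: Ξ₁) (.allI v β A (Ξ₁ ++ F :: Ξ₂) π₀)) π₁⟩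
          ⟨_, .allI v β A ((Ξ₁ ++ Ξ₂) ++ Δ)
              (.cut F (A.subst v (.var β) :: (Ξ₁ ++ Ξ₂)) Δ
                (LK.pull F (A.subst v (.var β) :: Ξ₁) π₀) π₁)⟩
  | exP {v : ℕ} {t : Term} {A F : Formula} {Ξ₁ Ξ₂ Δ : Sequent}
      (π₀ : LK (A.subst v t :: (Ξ₁ ++ F :: Ξ₂))) (π₁ : LK (F.dual :: Δ)) :
      RUn ⟨_, .cut F (.ex v A :: (Ξ₁ ++ Ξ₂)) Δ
              (LK.pull F (.ex v A :: Ξ₁) (.exI v t A (Ξ₁ ++ F :: Ξ₂) π₀)) π₁⟩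
          ⟨_, .exI v t A ((Ξ₁ ++ Ξ₂) ++ Δ)
              (.cut F (A.subst v t :: (Ξ₁ ++ Ξ₂)) Δ
                (LK.pull F (A.subst v t :: Ξ₁) π₀) π₁)⟩
  | wkP {B F : Formula} {Ξ₁ Ξ₂ Δ : Sequent} (π₀ : LK (Ξ₁ ++ F :: Ξ₂))
      (π₁ : LK (F.dual :: Δ)) :
      RUn ⟨_, .cut F (B :: (Ξ₁ ++ Ξ₂)) Δ
              (LK.pull F (B :: Ξ₁) (.wk B (Ξ₁ ++ F :: Ξ₂) π₀)) π₁⟩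
          ⟨_, .wk B ((Ξ₁ ++ Ξ₂) ++ Δ)
              (.cut F (Ξ₁ ++ Ξ₂) Δ (LK.pull F Ξ₁ π₀) π₁)⟩
  | ctrP {B F : Formula} {Ξ₁ Ξ₂ Δ : Sequent} (π₀ : LK (B :: B :: (Ξ₁ ++ F :: Ξ₂)))
      (π₁ : LK (F.dual :: Δ)) :
      RUn ⟨_, .cut F (B :: (Ξ₁ ++ Ξ₂)) Δ
              (LK.pull F (B :: Ξ₁) (.ctr B (Ξ₁ ++ F :: Ξ₂) π₀)) π₁⟩
          ⟨_, .ctr B ((Ξ₁ ++ Ξ₂) ++ Δ)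
              (.cut F (B :: B :: (Ξ₁ ++ Ξ₂)) Δ (LK.pull F (B :: B :: Ξ₁) π₀) π₁)⟩
  | permP {C D F : Formula} {Λ Θ Δ : Sequent} (π₀ : LK (F :: (Λ ++ D :: C :: Θ)))
      (π₁ : LK (F.dual :: Δ)) :
      RUn ⟨_, .cut F (Λ ++ C :: D :: Θ) Δ (.perm C D (F :: Λ) Θ π₀) π₁⟩
          ⟨(Λ ++ C :: D :: Θ) ++ Δ, LK.castSeq (by simp)
              (.perm C D Λ (Θ ++ Δ)
                (LK.castSeq (by simp) (.cut F (Λ ++ D :: C :: Θ) Δ π₀ π₁)))⟩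

/-- Root permutation of a binary inference (here `∧`) below a cut, the cut
attaching to the right premise. -/
inductive RBin : PProof → PProof → Prop
  | andR {A B F : Formula} {Γ Ξ₁ Ξ₂ Δ : Sequent} (π₀ : LK (A :: Γ))
      (π₁ : LK (B :: (Ξ₁ ++ F :: Ξ₂))) (π₂ : LK (F.dual :: Δ)) :
      RBin ⟨_, .cut F (.and A B :: ((Γ ++ Ξ₁) ++ Ξ₂)) Δ
              (LK.pull F (.and A B :: (Γ ++ Ξ₁))
                (LK.castSeq (by simp) (.andI A B Γ (Ξ₁ ++ F :: Ξ₂) π₀ π₁))) π₂⟩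
           ⟨(Formula.and A B :: ((Γ ++ Ξ₁) ++ Ξ₂)) ++ Δ, LK.castSeq (by simp)
              (.andI A B Γ ((Ξ₁ ++ Ξ₂) ++ Δ) π₀
                (.cut F (B :: (Ξ₁ ++ Ξ₂)) Δ (LK.pull F (B :: Ξ₁) π₁) π₂))⟩

/-- Root permutation of two cuts, on the cut formulas `F` and `G`. -/
inductive RCut (F G : Formula) : PProof → PProof → Prop
  | mk {Γ Δ Λ : Sequent} (π₀ : LK (F :: G :: Γ)) (π₁ : LK (F.dual :: Δ))
      (π₂ : LK (G.dual :: Λ)) : RCut F G (cutPerm1 π₀ π₁ π₂) (cutPerm2 π₀ π₁ π₂)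

/-- Any root reduction or permutation step of Figure 1. -/
def RedRoot (p q : PProof) : Prop :=
  RAx p q ∨ RBool p q ∨ RQuant p q ∨ RWk p q ∨ (∃ F, RCtr F p q) ∨ RUn p q ∨ RBin p q ∨
    ∃ F G, RCut F G p q

/-- Closure of a root relation under all inference-rule contexts: `Clo R`
applies `R` to an arbitrary sub-proof. -/
inductive Clo (R : PProof → PProof → Prop) : PProof → PProof → Prop
  | base {p q : PProof} : R p q → Clo R p q
  | orC {A B Γ} {p q : LK (A :: B :: Γ)} :
      Clo R ⟨_, p⟩ ⟨_, q⟩ → Clo R ⟨_, LK.orI A B Γ p⟩ ⟨_, LK.orI A B Γ q⟩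
  | andL {A B Γ Δ} {p q : LK (A :: Γ)} (r : LK (B :: Δ)) :
      Clo R ⟨_, p⟩ ⟨_, q⟩ → Clo R ⟨_, LK.andI A B Γ Δ p r⟩ ⟨_, LK.andI A B Γ Δ q r⟩
  | andR {A B Γ Δ} (r : LK (A :: Γ)) {p q : LK (B :: Δ)} :
      Clo R ⟨_, p⟩ ⟨_, q⟩ → Clo R ⟨_, LK.andI A B Γ Δ r p⟩ ⟨_, LK.andI A B Γ Δ r q⟩
  | allC {v α A Γ} {p q : LK (A.subst v (.var α) :: Γ)} :
      Clo R ⟨_, p⟩ ⟨_, q⟩ → Clo R ⟨_, LK.allI v α A Γ p⟩ ⟨_, LK.allI v α A Γ q⟩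
  | exC {v t A Γ} {p q : LK (A.subst v t :: Γ)} :
      Clo R ⟨_, p⟩ ⟨_, q⟩ → Clo R ⟨_, LK.exI v t A Γ p⟩ ⟨_, LK.exI v t A Γ q⟩
  | cutL {A Γ Δ} {p q : LK (A :: Γ)} (r : LK (A.dual :: Δ)) :
      Clo R ⟨_, p⟩ ⟨_, q⟩ → Clo R ⟨_, LK.cut A Γ Δ p r⟩ ⟨_, LK.cut A Γ Δ q r⟩
  | cutR {A Γ Δ} (r : LK (A :: Γ)) {p q : LK (A.dual :: Δ)} :
      Clo R ⟨_, p⟩ ⟨_, q⟩ → Clo R ⟨_, LK.cut A Γ Δ r p⟩ ⟨_, LK.cut A Γ Δ r q⟩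
  | wkC {A Γ} {p q : LK Γ} :
      Clo R ⟨_, p⟩ ⟨_, q⟩ → Clo R ⟨_, LK.wk A Γ p⟩ ⟨_, LK.wk A Γ q⟩
  | ctrC {A Γ} {p q : LK (A :: A :: Γ)} :
      Clo R ⟨_, p⟩ ⟨_, q⟩ → Clo R ⟨_, LK.ctr A Γ p⟩ ⟨_, LK.ctr A Γ q⟩
  | permC {A B Γ Δ} {p q : LK (Γ ++ B :: A :: Δ)} :
      Clo R ⟨_, p⟩ ⟨_, q⟩ → Clo R ⟨_, LK.perm A B Γ Δ p⟩ ⟨_, LK.perm A B Γ Δ q⟩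

/-- The one-step Gentzen cut-reduction relation (Figure 1), applied to an
arbitrary sub-proof. -/
def Red : PProof → PProof → Prop := Clo RedRoot

/-- Root reduction steps other than contraction reduction and cut-cut
permutation. -/
def OtherRoot (p r : PProof) : Prop :=
  RAx p r ∨ RBool p r ∨ RQuant p r ∨ RWk p r ∨ RUn p r ∨ RBin p r

/-- Root steps of the strategy of Theorem 1(1)-(2): a contraction on a
universally quantified Π₂ cut formula is reduced only when no other reduction
rule is applicable to this cut, and two cuts are permuted only when not both
cut formulas are Π₂. -/
def Strat1Root (p q : PProof) : Prop :=
  OtherRoot p q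
    ∨ (∃ F, RCtr F p q ∧ (UnivPi2 F → ∀ r, ¬ (OtherRoot p r ∨ ∃ F' G', RCut F' G' p r)))
    ∨ (∃ F G, RCut F G p q ∧ ¬ (Pi2 F ∧ Pi2 G))

/-- Root steps of the weak-side-first strategy: a step acting on the strong
(universal) side of a cut on a genuine Π₂ cut formula — a contraction
reduction, or a permutation of two Π₂ cuts — is taken only when no reduction
acting on the weak side is applicable to this cut. -/
def WeakFirstRoot (p q : PProof) : Prop :=
  OtherRoot p q
    ∨ (∃ F, RCtr F p q ∧ (UnivPi2 F → ∀ r, ¬ OtherRoot p r))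
    ∨ (∃ F G, RCut F G p q ∧ ((Pi2 F ∧ Pi2 G) → ∀ r, ¬ OtherRoot p r))

/-! ### Sub-proofs, non-terminal occurrences, types -/

/-- Immediate sub-proof. -/
inductive ImSub : PProof → PProof → Prop
  | orI {A B Γ} (p : LK (A :: B :: Γ)) : ImSub ⟨_, p⟩ ⟨_, LK.orI A B Γ p⟩
  | andL {A B Γ Δ} (p : LK (A :: Γ)) (q : LK (B :: Δ)) : ImSub ⟨_, p⟩ ⟨_, LK.andI A B Γ Δ p q⟩
  | andR {A B Γ Δ} (p : LK (A :: Γ)) (q : LK (B :: Δ)) : ImSub ⟨_, q⟩ ⟨_, LK.andI A B Γ Δ p q⟩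
  | allI {v α A Γ} (p : LK (A.subst v (.var α) :: Γ)) : ImSub ⟨_, p⟩ ⟨_, LK.allI v α A Γ p⟩
  | exI {v t A Γ} (p : LK (A.subst v t :: Γ)) : ImSub ⟨_, p⟩ ⟨_, LK.exI v t A Γ p⟩
  | cutL {A Γ Δ} (p : LK (A :: Γ)) (q : LK (A.dual :: Δ)) : ImSub ⟨_, p⟩ ⟨_, LK.cut A Γ Δ p q⟩
  | cutR {A Γ Δ} (p : LK (A :: Γ)) (q : LK (A.dual :: Δ)) : ImSub ⟨_, q⟩ ⟨_, LK.cut A Γ Δ p q⟩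
  | wk {A Γ} (p : LK Γ) : ImSub ⟨_, p⟩ ⟨_, LK.wk A Γ p⟩
  | ctr {A Γ} (p : LK (A :: A :: Γ)) : ImSub ⟨_, p⟩ ⟨_, LK.ctr A Γ p⟩
  | perm {A B Γ Δ} (p : LK (Γ ++ B :: A :: Δ)) : ImSub ⟨_, p⟩ ⟨_, LK.perm A B Γ Δ p⟩

/-- Strict sub-proof. -/
def StrictSub : PProof → PProof → Prop := Relation.TransGen ImSub

/-- The proofs indexing the non-terminals occurring in a grammar term. -/
def GTerm.nts : GTerm → List PProof
  | .bvar _ => []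
  | .fvar _ => []
  | .fn _ => []
  | .unit => []
  | .app s t => s.nts ++ t.nts
  | .lam s => s.nts
  | .pair s t => s.nts ++ t.nts
  | .esub s _ t => s.nts ++ t.nts
  | .nt p _ => [p]
  | .pr0 s => s.nts
  | .pr1 s => s.nts

/-- Types of the proof grammar: ground types `o` (structured first-order
terms) and `ε` (unit), pair types and function types. -/
inductive GType : Type
  | o
  | eps
  | prod (ρ σ : GType)
  | arr (ρ σ : GType)

/-- The order of a type. -/
def GType.ord : GType → ℕ
  | .o => 0
  | .eps => 0
  | .prod ρ σ => max ρ.ord σ.ord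
  | .arr ρ σ => max (ρ.ord + 1) σ.ord

/-- `o^n`. -/
def GType.opow : ℕ → GType
  | 0 => .eps
  | n + 1 => .prod .o (GType.opow n)

/-- `o → ⋯ → o → τ` with `m` arguments. -/
def GType.arrows : ℕ → GType → GType
  | 0, τ => τ
  | m + 1, τ => .arr .o (GType.arrows m τ)

/-- The output type `τ_F` of a prenex formula `F`. -/
def tauF (F : Formula) : GType := .opow F.prefEx

/-- The argument type `τ*_F` of a prenex formula `F`. -/
def taustarF (F : Formula) : GType :=
  if F.headEx = true ∧ 0 < F.prefAll then .arrows F.prefEx (.opow F.prefAll)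
  else .opow F.prefAll

/-- The type `τ*_{A₀} → ⋯ → τ*_{Aₙ} → τ_{Aᵢ}` of the non-terminal `σ_π^i`
for `π ⊢ Γ = A₀,…,Aₙ`. -/
def ntType (Γ : Sequent) (i : ℕ) : GType :=
  (Γ.map taustarF).foldr .arr (tauF (Γ.getD i default))

end PGram

/-!
A prenex cut formula of the shape `A ∧ B` is quantifier-free, so the composition terms of all
cut productions involved are the empty sequence `⟨⟩`. Started at `σ^i` applied to empty
sequences, the grammar is then deterministic: every non-terminal on the way has exactly one
applicable production, whose result is again a non-terminal applied to empty sequences. The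
grammar thus merely follows the formula index `i` up through the proof, and in both `π` and
`π'` this walk arrives at the same non-terminal `σ_{π₀}^{i+1}`, `σ_{π₁}^{i-|Γ|+1}` or
`σ_{π₂}^{i-|Γ|-|Δ|+2}`.
-/

namespace PGram

variable {cf : Bool}

lemma Formula.qfB_dual {F : Formula} (h : F.qfB = true) : F.dual.qfB = true := by
  induction F <;> simp_all [Formula.dual, Formula.qfB]

lemma qfB_of_pi2_or_sigma2_and {A B : Formula} (h : Pi2 (.and A B) ∨ Sigma2 (.and A B)) :
    A.qfB = true ∧ B.qfB = true := by
  obtain ⟨⟨h⟩⟩ | ⟨⟨h⟩⟩ := h <;> cases h with | qf h => simpa [Formula.qfB] using h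

def GTerm.head : GTerm → GTerm
  | .app s _ => s.head
  | s => s

def GTerm.args : GTerm → List GTerm
  | .app s t => s.args ++ [t]
  | _ => []

@[simp] lemma GTerm.args_app (s t : GTerm) : (GTerm.app s t).args = s.args ++ [t] := rfl

@[simp] lemma GTerm.head_apps (h : GTerm) (l : List GTerm) : (GTerm.apps h l).head = h.head := by
  induction l generalizing h with
  | nil => rfl
  | cons a l ih => exact ih (.app h a)

@[simp] lemma GTerm.args_apps (h : GTerm) (l : List GTerm) :
    (GTerm.apps h l).args = h.args ++ l := by
  induction l generalizing h with
  | nil => simp [GTerm.apps]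
  | cons a l ih =>
    show (GTerm.apps (.app h a) l).args = _
    simp [ih]

/-- `v` is the right-hand side of a production rule for `σ_P^j` applied to `args`: the rules of
`Step` whose left-hand side is a fully applied non-terminal, sorted by the last inference of `P`. -/
def IsProduction (cf : Bool) : PProof → ℕ → List GTerm → GTerm → Prop
  | ⟨_, .ax ..⟩, j, args, v => ∃ z₀ z₁, args = [z₀, z₁] ∧ (j = 0 ∧ v = z₁ ∨ j = 1 ∧ v = z₀)
  | ⟨_, .orI _ _ Γ p⟩, j, args, v => ∃ z ys, args = z :: ys ∧ ys.length = Γ.length ∧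
      (j = 0 ∧ v = .unit ∨
        ∃ i, j = i + 1 ∧ v = GTerm.apps (.nt ⟨_, p⟩ (i + 2)) (.unit :: .unit :: ys))
  | ⟨_, .andI _ _ Γ Δ p q⟩, j, args, v => ∃ z xs ys, args = z :: (xs ++ ys) ∧
      xs.length = Γ.length ∧ ys.length = Δ.length ∧
      (j = 0 ∧ v = .unit ∨
        ∃ i, j = i + 1 ∧ (i < Γ.length ∧ v = GTerm.apps (.nt ⟨_, p⟩ (i + 1)) (.unit :: xs) ∨
          Γ.length ≤ i ∧ v = GTerm.apps (.nt ⟨_, q⟩ (i - Γ.length + 1)) (.unit :: ys)))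
  | ⟨_, .allI _ α _ Γ p⟩, j, args, v => ∃ z ys, args = z :: ys ∧ ys.length = Γ.length ∧
      if cf then v = .esub (GTerm.apps (.nt ⟨_, p⟩ j) (.pr1 z :: ys)) α (.pr0 z)
      else ∃ z₀ z₁, z = .pair z₀ z₁ ∧ v = .esub (GTerm.apps (.nt ⟨_, p⟩ j) (z₁ :: ys)) α z₀
  | ⟨_, .exI _ t _ Γ p⟩, j, args, v => ∃ z ys, args = z :: ys ∧ ys.length = Γ.length ∧
      (j = 0 ∧ v = .pair t.toG (GTerm.apps (.nt ⟨_, p⟩ 0) (.app z t.toG :: ys)) ∨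
        ∃ i, j = i + 1 ∧ v = GTerm.apps (.nt ⟨_, p⟩ (i + 1)) (.app z t.toG :: ys))
  | ⟨_, .cut A Γ Δ p q⟩, j, args, v => ∃ xs ys, args = xs ++ ys ∧
      xs.length = Γ.length ∧ ys.length = Δ.length ∧
      (j < Γ.length ∧
          v = GTerm.apps (.nt ⟨_, p⟩ (j + 1)) (comp A.dual ⟨_, q⟩ ⟨_, p⟩ ys xs :: xs) ∨
        Γ.length ≤ j ∧
          v = GTerm.apps (.nt ⟨_, q⟩ (j - Γ.length + 1)) (comp A ⟨_, p⟩ ⟨_, q⟩ xs ys :: ys))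
  | ⟨_, .wk A Γ p⟩, j, args, v => ∃ z ys, args = z :: ys ∧ ys.length = Γ.length ∧
      (j = 0 ∧ v = GTerm.constSeq A.prefEx ∨ ∃ i, j = i + 1 ∧ v = GTerm.apps (.nt ⟨_, p⟩ i) ys)
  | ⟨_, .ctr _ Γ p⟩, j, args, v => ∃ z ys, args = z :: ys ∧ ys.length = Γ.length ∧
      (j = 0 ∧ (v = GTerm.apps (.nt ⟨_, p⟩ 0) (z :: z :: ys) ∨
          v = GTerm.apps (.nt ⟨_, p⟩ 1) (z :: z :: ys)) ∨
        ∃ i, j = i + 1 ∧ v = GTerm.apps (.nt ⟨_, p⟩ (i + 2)) (z :: z :: ys))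
  | ⟨_, .perm _ _ Γ Δ p⟩, j, args, v => ∃ xs z₀ z₁ ys, args = xs ++ z₀ :: z₁ :: ys ∧
      xs.length = Γ.length ∧ ys.length = Δ.length ∧
      v = GTerm.apps
        (.nt ⟨_, p⟩ (if j = Γ.length then j + 1 else if j = Γ.length + 1 then j - 1 else j))
        (xs ++ z₁ :: z₀ :: ys)

lemma IsProduction.length_eq {P : PProof} {j : ℕ} {args : List GTerm} {v : GTerm}
    (h : IsProduction cf P j args v) : args.length = P.1.length := by
  obtain ⟨_, p⟩ := P
  cases p <;> simp only [IsProduction] at h <;> grind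

lemma isProduction_of_step {u v : GTerm} (h : Step cf u v) {P : PProof} {j : ℕ}
    (hhead : u.head = .nt P j) (hargs : ∀ a ∈ u.args, NormalForm cf a)
    (hlen : u.args.length ≤ P.1.length) : IsProduction cf P j u.args v := by
  induction h
  case appL t _ ih =>
    -- a step inside the head would already need a complete argument list
    simp only [GTerm.args_app, List.length_append, List.length_singleton] at hlen
    have := (ih hhead (fun a ha => hargs a (by simp [ha])) (by omega)).length_eq
    omega
  case appR _ ht _ => exact absurd ht (hargs _ (by simp) _)
  -- the remaining non-production steps have a head other than a non-terminal
  all_goals simp only [GTerm.head_apps, GTerm.head, reduceCtorEq] at hhead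
  all_goals
    obtain ⟨rfl, rfl⟩ := hhead
    simp only [GTerm.args_apps, GTerm.args, List.nil_append, IsProduction]
  all_goals
    subst_vars
    grind

lemma IsProduction.step {P : PProof} {j : ℕ} {args : List GTerm} {v : GTerm}
    (h : IsProduction cf P j args v) : Step cf (GTerm.apps (.nt P j) args) v := by
  obtain ⟨_, p⟩ := P
  cases p with
  | ax =>
    obtain ⟨z₀, z₁, rfl, ⟨rfl, rfl⟩ | ⟨rfl, rfl⟩⟩ := h
    exacts [.ax0 .., .ax1 ..]
  | orI =>
    obtain ⟨z, ys, rfl, hy, ⟨rfl, rfl⟩ | ⟨i, rfl, rfl⟩⟩ := h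
    exacts [.orI0 _ _ _ hy, .orIS _ _ _ _ hy]
  | andI =>
    obtain ⟨z, xs, ys, rfl, hx, hy, ⟨rfl, rfl⟩ | ⟨i, rfl, ⟨hi, rfl⟩ | ⟨hi, rfl⟩⟩⟩ := h
    exacts [.andI0 _ _ _ _ _ hx hy, .andIL _ _ _ _ _ _ hx hy hi, .andIR _ _ _ _ _ _ hx hy hi]
  | allI =>
    obtain ⟨z, ys, rfl, hy, h⟩ := h
    cases cf
    · obtain ⟨z₀, z₁, rfl, rfl⟩ := h
      exact .allP _ _ _ _ _ hy rfl
    · exact h ▸ .allPcf _ _ _ _ hy rfl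
  | exI =>
    obtain ⟨z, ys, rfl, hy, ⟨rfl, rfl⟩ | ⟨i, rfl, rfl⟩⟩ := h
    exacts [.exI0 _ _ _ hy, .exIS _ _ _ _ hy]
  | cut =>
    obtain ⟨xs, ys, rfl, hx, hy, ⟨hj, rfl⟩ | ⟨hj, rfl⟩⟩ := h
    exacts [.cutL _ _ _ _ _ hx hy hj, .cutR _ _ _ _ _ hx hy hj]
  | wk =>
    obtain ⟨z, ys, rfl, hy, ⟨rfl, rfl⟩ | ⟨i, rfl, rfl⟩⟩ := h
    exacts [.wk0 _ _ _ hy, .wkS _ _ _ _ hy]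
  | ctr =>
    obtain ⟨z, ys, rfl, hy, ⟨rfl, rfl | rfl⟩ | ⟨i, rfl, rfl⟩⟩ := h
    exacts [.ctr0a _ _ _ hy, .ctr0b _ _ _ hy, .ctrS _ _ _ _ hy]
  | perm =>
    obtain ⟨xs, z₀, z₁, ys, rfl, hx, hy, rfl⟩ := h
    exact .permP _ _ _ _ _ _ hx hy

lemma step_apps_nt_iff {P : PProof} {j : ℕ} {args : List GTerm} {v : GTerm}
    (hargs : ∀ a ∈ args, NormalForm cf a) (hlen : args.length ≤ P.1.length) :
    Step cf (GTerm.apps (.nt P j) args) v ↔ IsProduction cf P j args v := by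
  refine ⟨fun h => ?_, IsProduction.step⟩
  simpa [GTerm.args] using
    isProduction_of_step h (by simp [GTerm.head]) (by simpa [GTerm.args] using hargs)
      (by simpa [GTerm.args] using hlen)

lemma normalForm_unit : NormalForm cf .unit := by
  intro v h
  generalize hu : GTerm.unit = u at h
  induction h <;> first | cases hu | simpa [GTerm.head] using congrArg GTerm.head hu

lemma step_startTerm_iff {P : PProof} {j : ℕ} {v : GTerm} :
    Step cf (startTerm P j) v ↔ IsProduction cf P j (List.replicate P.1.length .unit) v :=
  step_apps_nt_iff (fun a ha => List.eq_of_mem_replicate ha ▸ normalForm_unit) (by simp)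

lemma langT_eq_of_step_iff {S T : GTerm} (h : ∀ v, Step cf S v ↔ v = T) :
    LangT cf S = LangT cf T := by
  ext u
  constructor
  · rintro ⟨hSu, hu⟩
    rcases hSu.cases_head with rfl | ⟨c, hSc, hcu⟩
    · exact absurd ((h T).mpr rfl) (hu T)
    · exact (h c).mp hSc ▸ ⟨hcu, hu⟩
  · rintro ⟨hTu, hu⟩
    exact ⟨.head ((h T).mpr rfl) hTu, hu⟩

lemma langP_eq_of_langT_startTerm_eq {p q : PProof} (hlen : p.1.length = q.1.length)
    (h : ∀ i, LangT cf (startTerm p i) = LangT cf (startTerm q i)) : LangP cf p = LangP cf q := by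
  ext x
  simp only [LangP, Set.mem_ofPred_eq, hlen, h]

lemma langT_startTerm_cut {F : Formula} {Γ Δ : Sequent} (p : LK (F :: Γ))
    (q : LK (F.dual :: Δ)) (hF : F.qfB = true) (j : ℕ) :
    LangT cf (startTerm ⟨_, .cut F Γ Δ p q⟩ j) =
      if j < Γ.length then LangT cf (startTerm ⟨_, p⟩ (j + 1))
      else LangT cf (startTerm ⟨_, q⟩ (j - Γ.length + 1)) := by
  rw [← apply_ite]
  refine langT_eq_of_step_iff fun v => step_startTerm_iff.trans ?_
  simp only [IsProduction, comp, hF, Formula.qfB_dual hF, ↓reduceIte, List.length_append,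
    List.replicate_add]
  constructor
  · rintro ⟨xs, ys, hargs, hx, -, ⟨hj, rfl⟩ | ⟨hj, rfl⟩⟩ <;>
      obtain ⟨rfl, rfl⟩ := List.append_inj hargs (by simp [hx])
    · exact (if_pos hj).symm
    · exact (if_neg (by omega)).symm
  · rintro rfl
    refine ⟨_, _, rfl, List.length_replicate, List.length_replicate, ?_⟩
    split_ifs with hj
    · exact .inl ⟨hj, rfl⟩
    · exact .inr ⟨by omega, rfl⟩

lemma langT_startTerm_andI {F G : Formula} {Γ Δ : Sequent} (p : LK (F :: Γ)) (q : LK (G :: Δ))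
    (j : ℕ) :
    LangT cf (startTerm ⟨_, .andI F G Γ Δ p q⟩ (j + 1)) =
      if j < Γ.length then LangT cf (startTerm ⟨_, p⟩ (j + 1))
      else LangT cf (startTerm ⟨_, q⟩ (j - Γ.length + 1)) := by
  rw [← apply_ite]
  refine langT_eq_of_step_iff fun v => step_startTerm_iff.trans ?_
  simp only [IsProduction, List.length_cons, List.length_append, List.replicate_succ,
    List.replicate_add, List.cons.injEq, Nat.add_right_cancel_iff, exists_eq_left',
    Nat.add_one_ne_zero, false_and, false_or]
  constructor
  · rintro ⟨z, xs, ys, ⟨-, hargs⟩, hx, -, ⟨hj, rfl⟩ | ⟨hj, rfl⟩⟩ <;>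
      obtain ⟨rfl, rfl⟩ := List.append_inj hargs (by simp [hx])
    · exact (if_pos hj).symm
    · exact (if_neg (by omega)).symm
  · rintro rfl
    refine ⟨_, _, _, ⟨rfl, rfl⟩, List.length_replicate, List.length_replicate, ?_⟩
    split_ifs with hj
    · exact .inl ⟨hj, rfl⟩
    · exact .inr ⟨by omega, rfl⟩

lemma langT_startTerm_orI {F G : Formula} {Γ : Sequent} (p : LK (F :: G :: Γ)) (j : ℕ) :
    LangT cf (startTerm ⟨_, .orI F G Γ p⟩ (j + 1)) = LangT cf (startTerm ⟨_, p⟩ (j + 2)) := by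
  refine langT_eq_of_step_iff fun v => step_startTerm_iff.trans ?_
  simp only [IsProduction, List.length_cons, List.replicate_succ, List.cons.injEq,
    Nat.add_right_cancel_iff, exists_eq_left', Nat.add_one_ne_zero, false_and, false_or]
  constructor
  · rintro ⟨z, ys, ⟨-, rfl⟩, -, rfl⟩
    rfl
  · rintro rfl
    exact ⟨_, _, ⟨rfl, rfl⟩, List.length_replicate, rfl⟩

lemma langT_startTerm_perm {F G : Formula} {Γ Δ : Sequent} (p : LK (Γ ++ G :: F :: Δ))
    (j : ℕ) :
    LangT cf (startTerm ⟨_, .perm F G Γ Δ p⟩ j) = LangT cf (startTerm ⟨_, p⟩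
      (if j = Γ.length then j + 1 else if j = Γ.length + 1 then j - 1 else j)) := by
  refine langT_eq_of_step_iff fun v => step_startTerm_iff.trans ?_
  simp only [IsProduction, startTerm, List.length_append, List.length_cons, List.replicate_add,
    List.replicate_succ]
  constructor
  · rintro ⟨xs, z₀, z₁, ys, hargs, hx, -, rfl⟩
    obtain ⟨rfl, hrest⟩ := List.append_inj hargs (by simp [hx])
    simp only [List.cons.injEq] at hrest
    obtain ⟨rfl, rfl, rfl⟩ := hrest
    rfl
  · rintro rfl
    exact ⟨_, _, _, _, rfl, List.length_replicate, List.length_replicate, rfl⟩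

lemma LK.hoist_nil (A : Formula) (Ξ Θ : Sequent) (p : LK (Ξ ++ ([] ++ A :: Θ))) :
    LK.hoist A [] Ξ Θ p = p := by
  rw [LK.hoist, List.reverseRecOn_nil]

lemma LK.hoist_append_singleton (A C : Formula) (Λ Ξ Θ : Sequent)
    (p : LK (Ξ ++ ((Λ ++ [C]) ++ A :: Θ))) :
    LK.hoist A (Λ ++ [C]) Ξ Θ p =
      LK.castSeq (by simp) (LK.hoist A Λ Ξ (C :: Θ)
        (LK.castSeq (by simp) (LK.perm A C (Ξ ++ Λ) Θ (LK.castSeq (by simp) p)))) := by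
  unfold LK.hoist
  rw [List.reverseRecOn_concat]

lemma startTerm_castSeq {Γ Δ : Sequent} (h : Γ = Δ) (p : LK Γ) (k : ℕ) :
    startTerm ⟨Δ, LK.castSeq h p⟩ k = startTerm ⟨Γ, p⟩ k := by
  subst h; rfl

lemma langT_startTerm_pull (A : Formula) (Λ : Sequent) {Θ : Sequent} (p : LK (Λ ++ A :: Θ))
    (k : ℕ) :
    LangT cf (startTerm ⟨_, LK.pull A Λ p⟩ k) = LangT cf (startTerm ⟨_, p⟩
      (if k = 0 then Λ.length else if k ≤ Λ.length then k - 1 else k)) := by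
  induction Λ using List.reverseRecOn generalizing Θ k with
  | nil =>
    rw [LK.pull, LK.hoist_nil]
    congr 3
    simp only [List.length_nil]
    split_ifs <;> omega
  | append_singleton Λ C ih =>
    rw [LK.pull, LK.hoist_append_singleton, startTerm_castSeq]
    refine (ih (Θ := C :: Θ) _ k).trans ?_
    rw [startTerm_castSeq, langT_startTerm_perm, startTerm_castSeq]
    congr 2
    simp only [List.nil_append, List.length_append, List.length_singleton]
    split_ifs <;> omega

section BooleanReduction

variable {A B : Formula} {Γ Δ Λ : Sequent}
  (π₀ : LK (A :: Γ)) (π₁ : LK (B :: Δ)) (π₂ : LK (A.dual :: B.dual :: Λ)) (i : ℕ)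

lemma langT_startTerm_boolRedex (hA : A.qfB = true) (hB : B.qfB = true) :
    LangT cf (startTerm (boolRedex π₀ π₁ π₂) i) =
      if i < Γ.length then LangT cf (startTerm ⟨_, π₀⟩ (i + 1))
      else if i < Γ.length + Δ.length then LangT cf (startTerm ⟨_, π₁⟩ (i - Γ.length + 1))
      else LangT cf (startTerm ⟨_, π₂⟩ (i - (Γ.length + Δ.length) + 2)) := by
  have hAB : (Formula.and A B).qfB = true := by simp [Formula.qfB, hA, hB]
  refine (langT_startTerm_cut (F := .and A B) _ (.orI A.dual B.dual Λ π₂) hAB i).trans ?_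
  simp only [Formula.dual, langT_startTerm_andI, langT_startTerm_orI, List.length_append]
  split_ifs <;> first | rfl | omega

lemma langT_startTerm_boolReduct (hA : A.qfB = true) (hB : B.qfB = true) :
    LangT cf (startTerm (boolReduct π₀ π₁ π₂) i) =
      if i < Γ.length then LangT cf (startTerm ⟨_, π₀⟩ (i + 1))
      else if i < Γ.length + Δ.length then LangT cf (startTerm ⟨_, π₁⟩ (i - Γ.length + 1))
      else LangT cf (startTerm ⟨_, π₂⟩ (i - (Γ.length + Δ.length) + 2)) := by
  rw [boolReduct, startTerm_castSeq, langT_startTerm_cut _ _ hA, langT_startTerm_pull]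
  have hperm (j : ℕ) :
      LangT cf (startTerm ⟨B.dual :: A.dual :: Λ, LK.perm B.dual A.dual [] Λ π₂⟩ j) =
        LangT cf (startTerm ⟨_, π₂⟩ (if j = 0 then j + 1 else if j = 1 then j - 1 else j)) :=
    langT_startTerm_perm (Γ := []) π₂ j
  simp only [langT_startTerm_cut _ _ hB, hperm]
  split_ifs <;> first | rfl | contradiction | omega | (congr 2; omega)

end BooleanReduction

end PGram

open PGram in
theorem boolean_reduction_general {A B : Formula} {Γ Δ Λ : Sequent}
    (π₀ : LK (A :: Γ)) (π₁ : LK (B :: Δ)) (π₂ : LK (A.dual :: B.dual :: Λ))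
    (hcuts : (boolRedex π₀ π₁ π₂).2.CutsPi2Sigma2) :
    L (boolRedex π₀ π₁ π₂) = L (boolReduct π₀ π₁ π₂) := by
  obtain ⟨hA, hB⟩ :=
    qfB_of_pi2_or_sigma2_and (hcuts (.and A B) (by simp [boolRedex, LK.cutFormulas]))
  refine langP_eq_of_langT_startTerm_eq rfl fun i => ?_
  rw [langT_startTerm_boolRedex π₀ π₁ π₂ i hA hB, langT_startTerm_boolReduct π₀ π₁ π₂ i hA hB]

open PGram in
/-- The boolean reduction step — replacing a cut on `A ∧ B` between an
`∧`-inference (from `π₀ ⊢ A, Γ` and `π₁ ⊢ B, Δ`) and an `∨`-inference (from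
`π₂ ⊢ Ā, B̄, Π`) by a cut of `π₀` on `A` against the cut of `π₁` against `π₂`
on `B` — preserves the language of the proof grammar. -/
theorem boolean_reduction {A B : Formula} {Γ Δ Λ : Sequent}
    (π₀ : LK (A :: Γ)) (π₁ : LK (B :: Δ)) (π₂ : LK (A.dual :: B.dual :: Λ))
    (hreg : (boolRedex π₀ π₁ π₂).2.Regular)
    (hcuts : (boolRedex π₀ π₁ π₂).2.CutsPi2Sigma2) :
    L (boolRedex π₀ π₁ π₂) = L (boolReduct π₀ π₁ π₂) :=
  boolean_reduction_general π₀ π₁ π₂ hcuts
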